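/- arXiv:1309.6700 — 3 statements merged into one kernel-verified Lean document; each statement's English description precedes it below -/
import Mathlib

section
/- Let k ≥ 1 and let G be a bipartite graph with parts X and Y where |X| ≥ k and |Y| ≥ k − 1. If G does not contain a path on 2k+1 vertices both of whose endpoints lie in X, then the number of edges of G satisfies e(G) ≤ (k−1)|X| + k|Y| − k(k−1). -/
/-!
Count the edges between `X` and `Y` and induct on `|X| + |Y|`. If `|X| = k` the bound is
`e ≤ k|Y|`. Otherwise, a vertex of `Y` with at most `k` neighbours, or a vertex of `X` with fewer
than `k` neighbours, can be deleted, as the bound drops by `k` resp. `k - 1`. If there is no such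
vertex, every vertex of `X` has at least `k` neighbours and every vertex of `Y` at least `k + 1`,
so a path with both ends in `X` can be grown greedily, two edges at a time, up to `2k` edges:
a path with `2i` edges has only `i` vertices in `Y` and `i + 1` in `X`, so its end always has an
unused neighbour.
-/

open SimpleGraph Finset

section

variable {V : Type*} [DecidableEq V]

theorem Finset.exists_mem_notMem_of_card_inter_lt_card_filter {A S : Finset V} {P : V → Prop}
    [DecidablePred P] (h : #(S ∩ A) < #{c ∈ A | P c}) : ∃ c ∈ A, P c ∧ c ∉ S := by
  obtain ⟨c, hc, hcS⟩ := exists_mem_notMem_of_card_lt_card h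
  rw [mem_filter] at hc
  exact ⟨c, hc.1, hc.2, fun h => hcS (mem_inter.mpr ⟨h, hc.1⟩)⟩

variable {G : SimpleGraph V} [DecidableRel G.Adj] {k : ℕ}

theorem exists_isPath_length_two_mul_of_le_card_bipartiteAbove {X Y : Finset V}
    (hXY : Disjoint X Y) (hX : X.Nonempty)
    (hdegX : ∀ x ∈ X, k ≤ #(Y.bipartiteAbove G.Adj x))
    (hdegY : ∀ y ∈ Y, k < #(X.bipartiteBelow G.Adj y)) :
    ∀ i ≤ k, ∃ a ∈ X, ∃ b ∈ X, ∃ p : G.Walk a b, p.IsPath ∧ p.length = 2 * i ∧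
      #(p.support.toFinset ∩ X) = i + 1 ∧ #(p.support.toFinset ∩ Y) = i := by
  intro i
  induction i with
  | zero =>
    obtain ⟨a, ha⟩ := hX
    exact fun _ => ⟨a, ha, a, ha, .nil, by simp, rfl, by simp [ha],
      by simp [disjoint_left.mp hXY ha]⟩
  | succ i ih =>
    intro hik
    obtain ⟨a, ha, b, hb, p, hp, hlen, hpX, hpY⟩ := ih (by omega)
    obtain ⟨y, hyY, hay, hyp⟩ := exists_mem_notMem_of_card_inter_lt_card_filter
      (S := p.support.toFinset) (A := Y) (P := G.Adj a) (by grind [bipartiteAbove])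
    have hyX : y ∉ X := disjoint_right.mp hXY hyY
    have hqX : #((insert y p.support.toFinset) ∩ X) = i + 1 := by
      rwa [insert_inter_of_notMem hyX]
    obtain ⟨x, hxX, hxy, hxq⟩ := exists_mem_notMem_of_card_inter_lt_card_filter
      (S := insert y p.support.toFinset) (A := X) (P := (G.Adj · y)) (by grind [bipartiteBelow])
    have hxY : x ∉ Y := disjoint_left.mp hXY hxX
    refine ⟨x, hxX, b, hb, .cons hxy (.cons hay.symm p), ?_, by simp only [Walk.length_cons, hlen]; ring, ?_, ?_⟩
    · exact (hp.cons (by simpa using hyp)).cons (by simpa using hxq)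
    · simp only [Walk.support_cons, List.toFinset_cons]
      rw [insert_inter_of_mem hxX, card_insert_of_notMem (fun h => hxq (mem_of_mem_inter_left h)),
        hqX]
    · simp only [Walk.support_cons, List.toFinset_cons]
      rw [insert_inter_of_notMem hxY, insert_inter_of_mem hyY,
        card_insert_of_notMem (fun h => hyp (by simpa using mem_of_mem_inter_left h)), hpY]

theorem sum_card_bipartiteAbove_add_le {X Y : Finset V} (hXY : Disjoint X Y) (hX : k ≤ #X)
    (hfree : ¬ ∃ a ∈ X, ∃ b ∈ X, ∃ p : G.Walk a b, p.IsPath ∧ p.length = 2 * k) :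
    ∑ x ∈ X, #(Y.bipartiteAbove G.Adj x) + k * (k - 1) ≤ (k - 1) * #X + k * #Y := by
  obtain hXk | hXk := hX.eq_or_lt
  · have := sum_le_card_nsmul X (fun x => #(Y.bipartiteAbove G.Adj x)) #Y fun x _ =>
      card_le_card (filter_subset _ _)
    rw [smul_eq_mul, ← hXk] at this
    rw [← hXk, mul_comm (k - 1)]
    omega
  by_cases hlowY : ∃ y ∈ Y, #(X.bipartiteBelow G.Adj y) ≤ k
  · obtain ⟨y, hy, hdeg⟩ := hlowY
    have ih := sum_card_bipartiteAbove_add_le (hXY.mono_right (erase_subset y Y)) hX hfree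
    obtain ⟨m, hm⟩ := Nat.exists_eq_add_one_of_ne_zero (card_ne_zero_of_mem hy)
    rw [sum_card_bipartiteAbove_eq_sum_card_bipartiteBelow] at ih ⊢
    rw [← add_sum_erase Y _ hy, hm]
    rw [card_erase_of_mem hy, hm, Nat.add_sub_cancel] at ih
    linarith
  by_cases hlowX : ∃ x ∈ X, #(Y.bipartiteAbove G.Adj x) < k
  · obtain ⟨x, hx, hdeg⟩ := hlowX
    have ih := sum_card_bipartiteAbove_add_le (hXY.mono_left (erase_subset x X))
      (by rw [card_erase_of_mem hx]; omega)
      fun ⟨a, ha, b, hb, p, hp⟩ => hfree ⟨a, mem_of_mem_erase ha, b, mem_of_mem_erase hb, p, hp⟩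
    obtain ⟨m, hm⟩ := Nat.exists_eq_add_one_of_ne_zero (card_ne_zero_of_mem hx)
    rw [← add_sum_erase X _ hx, hm]
    rw [card_erase_of_mem hx, hm, Nat.add_sub_cancel] at ih
    have : #(Y.bipartiteAbove G.Adj x) ≤ k - 1 := by omega
    nlinarith
  push Not at hlowY hlowX
  obtain ⟨a, ha, b, hb, p, hp, hlen, -⟩ := exists_isPath_length_two_mul_of_le_card_bipartiteAbove
    hXY (card_pos.mp (by omega)) hlowX hlowY k le_rfl
  exact absurd ⟨a, ha, b, hb, p, hp, hlen⟩ hfree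
termination_by #X + #Y
decreasing_by
  · exact Nat.add_lt_add_left (card_erase_lt_of_mem hy) _
  · exact Nat.add_lt_add_right (card_erase_lt_of_mem hx) _

end

theorem leastEigenvalue_stmt0_general {V : Type*} [Fintype V] [DecidableEq V]
    (G : SimpleGraph V) [DecidableRel G.Adj]
    (X Y : Finset V) (hdisj : Disjoint X Y)
    (hbip : ∀ v w : V, G.Adj v w → ((v ∈ X ∧ w ∈ Y) ∨ (v ∈ Y ∧ w ∈ X)))
    (k : ℕ) (hX : k ≤ X.card)
    (hfree : ¬ ∃ (a b : V) (p : G.Walk a b),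
        p.IsPath ∧ p.length + 1 = 2 * k + 1 ∧ a ∈ X ∧ b ∈ X) :
    G.edgeFinset.card + k * (k - 1) ≤ (k - 1) * X.card + k * Y.card := by
  have hG : G.IsBipartiteWith X Y := ⟨disjoint_coe.mpr hdisj, hbip⟩
  have hE : #G.edgeFinset = ∑ x ∈ X, #(Y.bipartiteAbove G.Adj x) := by
    rw [← isBipartiteWith_sum_degrees_eq_card_edges hG]
    refine sum_congr rfl fun x hx => ?_
    rw [← card_neighborFinset_eq_degree, isBipartiteWith_bipartiteAbove hG hx]
  rw [hE]
  exact sum_card_bipartiteAbove_add_le hdisj hX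
    fun ⟨a, ha, b, hb, p, hp, hlen⟩ => hfree ⟨a, b, p, hp, by omega, ha, hb⟩

/-- Let `k ≥ 1` and let `G` be a bipartite graph with parts `X` and `Y` where `|X| ≥ k` and
`|Y| ≥ k - 1`.  If `G` contains no path on `2k+1` vertices with both endpoints in `X`, then
`e(G) ≤ (k-1)|X| + k|Y| - k(k-1)` (stated with the subtracted term moved to the left-hand
side to avoid truncated natural subtraction). -/
theorem leastEigenvalue_stmt0 {V : Type*} [Fintype V] [DecidableEq V]
    (G : SimpleGraph V) [DecidableRel G.Adj]
    (X Y : Finset V) (hdisj : Disjoint X Y) (hcover : X ∪ Y = Finset.univ)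
    (hbip : ∀ v w : V, G.Adj v w → ((v ∈ X ∧ w ∈ Y) ∨ (v ∈ Y ∧ w ∈ X)))
    (k : ℕ) (hk : 1 ≤ k) (hX : k ≤ X.card) (hY : k - 1 ≤ Y.card)
    (hfree : ¬ ∃ (a b : V) (p : G.Walk a b),
        p.IsPath ∧ p.length + 1 = 2 * k + 1 ∧ a ∈ X ∧ b ∈ X) :
    G.edgeFinset.card + k * (k - 1) ≤ (k - 1) * X.card + k * Y.card :=
  leastEigenvalue_stmt0_general G X Y hdisj hbip k hX hfree
end

section
/- Let k ≥ 1 and let G be a bipartite graph of order n ≥ 2k+2 containing no cycle on 2k+2 vertices. Then the adjacency spectral radius satisfies ρ(G) ≤ √(k(n−k)), and equality holds if and only if G is isomorphic to the complete bipartite graph K_{k,n−k}. -/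
open SimpleGraph Finset

open Classical in
/-- The adjacency matrix of `G` over `ℝ`. -/
noncomputable def adjMat {V : Type*} [Fintype V] (G : SimpleGraph V) : Matrix V V ℝ :=
  Matrix.of fun v w => if G.Adj v w then 1 else 0

/-- `μ` is an eigenvalue of the adjacency matrix of `G`. -/
def IsAdjEigenvalue {V : Type*} [Fintype V] (G : SimpleGraph V) (μ : ℝ) : Prop :=
  ∃ x : V → ℝ, x ≠ 0 ∧ (adjMat G).mulVec x = μ • x

/-- `ρ(G)`: the spectral radius of the adjacency matrix of `G`, i.e. the largest absolute
value of an eigenvalue. -/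
noncomputable def specRad {V : Type*} [Fintype V] (G : SimpleGraph V) : ℝ :=
  sSup {r : ℝ | ∃ μ : ℝ, IsAdjEigenvalue G μ ∧ r = |μ|}

/-- A graph is bipartite if its vertices can be two-colored so that every edge joins the two
color classes. -/
def IsBipartite {V : Type*} (G : SimpleGraph V) : Prop :=
  ∃ s : Set V, ∀ ⦃v w : V⦄, G.Adj v w → (v ∈ s ↔ w ∉ s)

/-- `G` contains a cycle on `t` vertices. -/
def HasCycleOn {V : Type*} (G : SimpleGraph V) (t : ℕ) : Prop :=
  ∃ (a : V) (p : G.Walk a a), p.IsCycle ∧ p.length = t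

/-!
For a vertex `u` let `S(u) = ∑_{v ∼ u} deg v`. If `x` is an eigenvector for `μ` and `|x|` is
maximal at `u`, with `x u > 0`, then `μ² x u = (A² x) u ≤ S(u) x u`, so `μ² ≤ max_u S(u)`.

To bound `S(u)`, let `A = N(u)` and let `B` be the set of vertices at distance two from `u`; these
are disjoint since `G` is bipartite, and `S(u) = |A| + e(A, B)`. A path of length `2k` inside
`A ∪ B` with both ends in `A` closes up through `u` to a cycle of length `2k + 2`, so an
Erdős–Gallai type argument gives `e(A, B) ≤ (k - 1)|A| + k(|B| + 1 - k)` when `|B| ≥ k`. Hence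
`S(u) ≤ k(n - k)`, with equality only if every vertex is within distance two of `u`.

If `μ² = k(n - k)`, equality in `μ² x u ≤ S(u) x u` forces `x` to take the value `x u` at every
vertex at distance two from `u`. These vertices are then maximal as well, so equality spreads
over the whole colour class of `u`, and every vertex of that class is adjacent to every vertex
of the other one. For the colour classes `X`, `Y` this gives `|X| |Y| = S(u) = k(n - k)` and
`|X| + |Y| = n`, so the classes have sizes `k` and `n - k`.
-/

open scoped Matrix

/-- The count behind `SimpleGraph.neighborDegreeSum_le`: `a = |N(u)|`, `b` is the number of
vertices at distance two from `u` and `e` the number of edges between the two sets. -/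
theorem Nat.add_le_mul_sub_of_le {a b e k n : ℕ} (hk : 1 ≤ k) (hkn : 2 * k ≤ n)
    (habn : a + b + 1 ≤ n) (he : e ≤ a * b) (hek : k ≤ b → e ≤ (k - 1) * a + k * (b + 1 - k)) :
    a + e ≤ k * (n - k) ∧ (a + e = k * (n - k) → a + b + 1 = n) := by
  obtain ⟨m, rfl⟩ : ∃ m, n = k + m := ⟨n - k, by omega⟩
  rw [Nat.add_sub_cancel_left]
  rcases le_or_gt k b with hkb | hbk
  · obtain ⟨c, rfl⟩ : ∃ c, b = k + c := ⟨b - k, by omega⟩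
    obtain ⟨j, rfl⟩ : ∃ j, k = j + 1 := ⟨k - 1, by omega⟩
    have he' : e ≤ j * a + (j + 1) * (c + 1) := by
      simpa [show j + 1 + c + 1 - (j + 1) = c + 1 by omega] using hek hkb
    have hacm : a + c + 1 ≤ m := by omega
    refine ⟨by nlinarith, fun h => ?_⟩
    have : (j + 1) * m ≤ (j + 1) * (a + c + 1) := by nlinarith
    have := Nat.le_of_mul_le_mul_left this (by omega)
    omega
  · obtain ⟨d, rfl⟩ : ∃ d, k = b + 1 + d := ⟨k - (b + 1), by omega⟩
    obtain ⟨r, rfl⟩ : ∃ r, m = b + 1 + d + r := ⟨m - (b + 1 + d), by omega⟩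
    have har : a ≤ 2 * d + r + b + 1 := by omega
    refine ⟨by nlinarith, fun h => ?_⟩
    have : (2 * d + r + b + 1) * (b + 1) ≤ a * (b + 1) := by nlinarith
    have := Nat.le_of_mul_le_mul_right this (by omega)
    omega

theorem Nat.eq_and_eq_or_eq_and_eq_of_mul_eq {a b k n : ℕ} (hab : a + b = n) (hkn : k ≤ n)
    (h : a * b = k * (n - k)) : a = k ∧ b = n - k ∨ a = n - k ∧ b = k := by
  subst hab
  have h' : ((a : ℤ) - k) * ((b : ℤ) - k) = 0 := by
    zify [hkn] at h
    linear_combination h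
  rcases _root_.mul_eq_zero.mp h' with h' | h' <;> omega

namespace SimpleGraph

variable {V : Type*} {G : SimpleGraph V}

section Paths

variable {A B S : Finset V} {k ℓ : ℕ}

def HasPathIn (G : SimpleGraph V) (A S : Finset V) (ℓ : ℕ) : Prop :=
  ∃ (a b : V) (p : G.Walk a b), p.IsPath ∧ p.length = ℓ ∧ a ∈ A ∧ b ∈ A ∧ ∀ v ∈ p.support, v ∈ S

theorem HasPathIn.mono {A' S' : Finset V} (h : G.HasPathIn A S ℓ) (hA : A ⊆ A') (hS : S ⊆ S') :
    G.HasPathIn A' S' ℓ := by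
  obtain ⟨a, b, p, hp, hlen, ha, hb, hpS⟩ := h
  exact ⟨a, b, p, hp, hlen, hA ha, hA hb, fun v hv => hS (hpS v hv)⟩

theorem hasCycleOn_of_hasPathIn {u : V} (hℓ : 1 ≤ ℓ) (huA : ∀ a ∈ A, G.Adj u a) (huS : u ∉ S)
    (h : G.HasPathIn A S ℓ) : HasCycleOn G (ℓ + 2) := by
  obtain ⟨a, b, p, hp, hlen, ha, hb, hpS⟩ := h
  have hup : u ∉ p.support := fun h => huS (hpS u h)
  have hab : a ≠ b := by
    rintro rfl
    have := Walk.length_eq_zero_iff.mpr (Walk.isPath_iff_nil.mp hp)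
    omega
  refine ⟨u, .cons (huA a ha) (p.concat (huA b hb).symm), ?_, by simp [hlen]⟩
  rw [Walk.cons_isCycle_iff, Walk.edges_concat]
  refine ⟨hp.concat hup _, fun he => ?_⟩
  simp only [List.concat_eq_append, List.mem_append, List.mem_singleton] at he
  rcases he with he | he
  · exact hup (p.fst_mem_support_of_mem_edges he)
  · exact hab (Sym2.congr_left.mp (Sym2.eq_swap.trans he))

variable [DecidableEq V] [DecidableRel G.Adj]

theorem hasPathIn_of_le_card_bipartite (hAB : Disjoint A B) (hA : A.Nonempty)
    (hdegA : ∀ a ∈ A, k ≤ #(B.bipartiteAbove G.Adj a))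
    (hdegB : ∀ b ∈ B, k + 1 ≤ #(A.bipartiteBelow G.Adj b)) :
    G.HasPathIn A (A ∪ B) (2 * k) := by
  -- extend the path at its start by two fresh vertices; the counts ensure they exist
  suffices ∀ i ≤ k, ∃ (a c : V) (p : G.Walk a c), p.IsPath ∧ p.length = 2 * i ∧ a ∈ A ∧ c ∈ A ∧
      (∀ v ∈ p.support, v ∈ A ∪ B) ∧
      #(p.support.toFinset ∩ B) ≤ i ∧ #(p.support.toFinset ∩ A) ≤ i + 1 by
    obtain ⟨a, c, p, hp, hlen, ha, hc, hpS, -⟩ := this k le_rfl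
    exact ⟨a, c, p, hp, hlen, ha, hc, hpS⟩
  intro i hi
  induction i with
  | zero =>
    obtain ⟨a, ha⟩ := hA
    have haB : a ∉ B := Finset.disjoint_left.mp hAB ha
    refine ⟨a, a, .nil, .nil, rfl, ha, ha, by simp [ha], ?_, ?_⟩ <;> simp [haB, ha]
  | succ i ih =>
    obtain ⟨a, c, p, hp, hlen, ha, hc, hpS, hpB, hpA⟩ := ih (by omega)
    obtain ⟨b, hb, hbp⟩ := exists_mem_notMem_of_card_lt_card
      (s := p.support.toFinset ∩ B) (t := B.bipartiteAbove G.Adj a) (by linarith [hdegA a ha])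
    rw [mem_bipartiteAbove] at hb
    obtain ⟨a', ha', ha'p⟩ := exists_mem_notMem_of_card_lt_card
      (s := p.support.toFinset ∩ A) (t := A.bipartiteBelow G.Adj b) (by linarith [hdegB b hb.1])
    rw [mem_bipartiteBelow] at ha'
    have hbA : b ∉ A := Finset.disjoint_right.mp hAB hb.1
    have ha'B : a' ∉ B := Finset.disjoint_left.mp hAB ha'.1
    replace hbp : b ∉ p.support := by simpa [hb.1] using hbp
    replace ha'p : a' ∉ p.support := by simpa [ha'.1] using ha'p
    refine ⟨a', c, .cons ha'.2 (.cons hb.2.symm p), (hp.cons hbp).cons ?_, ?_, ha'.1, hc,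
      ?_, ?_, ?_⟩
    · simp [ha'.2.ne, ha'p]
    · simp only [Walk.length_cons, hlen]
      ring
    · simp only [Walk.support_cons, List.mem_cons, mem_union]
      rintro v (rfl | rfl | hv)
      exacts [.inl ha'.1, .inr hb.1, mem_union.mp (hpS v hv)]
    · simpa [insert_inter_of_notMem ha'B, insert_inter_of_mem hb.1] using
        (card_insert_le _ _).trans (Nat.succ_le_succ hpB)
    · simpa [insert_inter_of_mem ha'.1, insert_inter_of_notMem hbA] using
        (card_insert_le _ _).trans (Nat.succ_le_succ hpA)

/-- An Erdős–Gallai type bound: peel off vertices of small degree until the greedy construction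
of `hasPathIn_of_le_card_bipartite` applies. -/
theorem sum_card_bipartiteAbove_le (hk : 1 ≤ k) (hAB : Disjoint A B)
    (hP : ¬ G.HasPathIn A (A ∪ B) (2 * k)) :
    ∑ a ∈ A, #(B.bipartiteAbove G.Adj a) ≤ (k - 1) * #A + k * (#B + 1 - k) := by
  induction hN : #A + #B using Nat.strong_induction_on generalizing A B with
  | _ N ih =>
  rcases A.eq_empty_or_nonempty with rfl | hA
  · simp
  by_cases hlowA : ∃ a ∈ A, #(B.bipartiteAbove G.Adj a) < k
  · obtain ⟨a, ha, hdeg⟩ := hlowA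
    have hrest := ih _ (by have := card_erase_lt_of_mem ha; omega)
      (hAB.mono_left (erase_subset a A))
      (fun h => hP (h.mono (erase_subset a A) (union_subset_union_left (erase_subset a A)))) rfl
    rw [← add_sum_erase A _ ha, ← card_erase_add_one ha, mul_add_one]
    omega
  push Not at hlowA
  by_cases hlowB : ∃ b ∈ B, #(A.bipartiteBelow G.Adj b) ≤ k
  · obtain ⟨b, hb, hdeg⟩ := hlowB
    have hkB : k ≤ #B := (hlowA _ hA.choose_spec).trans (card_le_card (filter_subset _ _))
    have hrest := ih _ (by have := card_erase_lt_of_mem hb; omega)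
      (hAB.mono_right (erase_subset b B))
      (fun h => hP (h.mono subset_rfl (union_subset_union_right (erase_subset b B)))) rfl
    rw [sum_card_bipartiteAbove_eq_sum_card_bipartiteBelow] at hrest ⊢
    rw [← add_sum_erase B _ hb, ← card_erase_add_one hb,
      show #(B.erase b) + 1 + 1 - k = #(B.erase b) + 1 - k + 1 by
        have := card_erase_add_one hb; omega, mul_add_one]
    omega
  push Not at hlowB
  exact absurd (hasPathIn_of_le_card_bipartite hAB hA hlowA hlowB) hP

end Paths

section Neighborhood

variable [Fintype V] [DecidableEq V]

def neighborDegreeSum (G : SimpleGraph V) [DecidableRel G.Adj] (u : V) : ℕ :=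
  ∑ v ∈ G.neighborFinset u, G.degree v

def secondNeighborFinset (G : SimpleGraph V) [DecidableRel G.Adj] (u : V) : Finset V :=
  {w | w ≠ u ∧ ∃ v, G.Adj u v ∧ G.Adj v w}

variable [DecidableRel G.Adj] {s : Set V} {k : ℕ} {u : V}

@[simp]
theorem mem_secondNeighborFinset {w : V} :
    w ∈ G.secondNeighborFinset u ↔ w ≠ u ∧ ∃ v, G.Adj u v ∧ G.Adj v w := by
  simp [secondNeighborFinset]

theorem neighborDegreeSum_eq_card_add_sum (u : V) :
    G.neighborDegreeSum u = #(G.neighborFinset u) +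
      ∑ v ∈ G.neighborFinset u, #((G.secondNeighborFinset u).bipartiteAbove G.Adj v) := by
  rw [neighborDegreeSum, card_eq_sum_ones, ← sum_add_distrib]
  refine sum_congr rfl fun v hv => ?_
  have huv : u ∈ G.neighborFinset v := by simpa [adj_comm] using hv
  have hfilter :
      (G.secondNeighborFinset u).bipartiteAbove G.Adj v = (G.neighborFinset v).erase u := by
    ext w
    simp only [mem_bipartiteAbove, mem_secondNeighborFinset, mem_erase, mem_neighborFinset]
    exact ⟨fun ⟨⟨hwu, _⟩, hvw⟩ => ⟨hwu, hvw⟩,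
      fun ⟨hwu, hvw⟩ => ⟨⟨hwu, v, (mem_neighborFinset _ _ _).mp hv, hvw⟩, hvw⟩⟩
  rw [hfilter, card_erase_of_mem huv, ← card_neighborFinset_eq_degree]
  have := card_pos.mpr ⟨u, huv⟩
  omega

theorem disjoint_neighborFinset_secondNeighborFinset (hs : ∀ ⦃v w⦄, G.Adj v w → (v ∈ s ↔ w ∉ s))
    (u : V) : Disjoint (G.neighborFinset u) (G.secondNeighborFinset u) := by
  refine Finset.disjoint_left.mpr fun w hw hw' => ?_
  obtain ⟨-, v, huv, hvw⟩ := mem_secondNeighborFinset.mp hw'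
  have := hs ((mem_neighborFinset _ _ _).mp hw)
  have := hs huv
  have := hs hvw
  tauto

theorem card_insert_neighborFinset_union_secondNeighborFinset
    (hs : ∀ ⦃v w⦄, G.Adj v w → (v ∈ s ↔ w ∉ s)) (u : V) :
    #(insert u (G.neighborFinset u ∪ G.secondNeighborFinset u)) =
      #(G.neighborFinset u) + #(G.secondNeighborFinset u) + 1 := by
  rw [card_insert_of_notMem (by simp), card_union_of_disjoint
    (disjoint_neighborFinset_secondNeighborFinset hs u)]

theorem not_hasPathIn_neighborFinset (hk : 1 ≤ k) (hfree : ¬ HasCycleOn G (2 * k + 2)) (u : V) :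
    ¬ G.HasPathIn (G.neighborFinset u) (G.neighborFinset u ∪ G.secondNeighborFinset u) (2 * k) :=
  fun h => hfree (hasCycleOn_of_hasPathIn (by omega) (fun a ha => (mem_neighborFinset _ _ _).mp ha)
    (by simp) h)

theorem neighborDegreeSum_le (hk : 1 ≤ k) (hn : 2 * k ≤ Fintype.card V)
    (hs : ∀ ⦃v w⦄, G.Adj v w → (v ∈ s ↔ w ∉ s)) (hfree : ¬ HasCycleOn G (2 * k + 2)) (u : V) :
    G.neighborDegreeSum u ≤ k * (Fintype.card V - k) ∧
      (G.neighborDegreeSum u = k * (Fintype.card V - k) →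
        ∀ v, v = u ∨ G.Adj u v ∨ ∃ w, G.Adj u w ∧ G.Adj w v) := by
  have hball := card_insert_neighborFinset_union_secondNeighborFinset hs u
  rw [neighborDegreeSum_eq_card_add_sum]
  obtain ⟨hle, heq⟩ := Nat.add_le_mul_sub_of_le hk hn (hball ▸ card_le_univ _)
    (sum_le_card_nsmul _ _ _ fun v _ => card_le_card (filter_subset _ _))
    (fun _ => sum_card_bipartiteAbove_le hk (disjoint_neighborFinset_secondNeighborFinset hs u)
      (not_hasPathIn_neighborFinset hk hfree u))
  refine ⟨hle, fun h v => ?_⟩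
  have hv := eq_univ_of_card _ (hball.trans (heq h)) ▸ mem_univ v
  simp only [mem_insert, mem_union, mem_neighborFinset, mem_secondNeighborFinset] at hv
  tauto

end Neighborhood

section CompleteBipartite

variable {s : Set V}

theorem adj_iff_of_forall_within_two (hs : ∀ ⦃v w⦄, G.Adj v w → (v ∈ s ↔ w ∉ s))
    {F : Set V} {u : V} (hu : u ∈ F) (hF : ∀ p ∈ F, ∀ v w, G.Adj p v → G.Adj v w → w ∈ F)
    (hcover : ∀ p ∈ F, ∀ v, v = p ∨ G.Adj p v ∨ ∃ w, G.Adj p w ∧ G.Adj w v) (v w : V) :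
    G.Adj v w ↔ (v ∈ s ↔ w ∉ s) := by
  refine ⟨fun h => hs h, fun hvw => ?_⟩
  have hcolor : ∀ p, (p ∈ s ↔ u ∈ s) → p ∈ F := by
    intro p hp
    rcases hcover u hu p with rfl | hup | ⟨q, huq, hqp⟩
    · exact hu
    · have := hs hup
      tauto
    · exact hF u hu q p huq hqp
  have hadj : ∀ p ∈ F, ∀ q, (p ∈ s ↔ q ∉ s) → G.Adj p q := by
    intro p hp q hpq
    rcases hcover p hp q with rfl | hpq' | ⟨r, hpr, hrq⟩
    · tauto
    · exact hpq'
    · have := hs hpr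
      have := hs hrq
      tauto
  by_cases hv : v ∈ s ↔ u ∈ s
  · exact hadj v (hcolor v hv) w hvw
  · exact (hadj w (hcolor w (by tauto)) v (by tauto)).symm

variable [Fintype V] [DecidablePred (· ∈ s)]

theorem nonempty_iso_completeBipartiteGraph_of_adj_iff
    (hG : ∀ v w, G.Adj v w ↔ (v ∈ s ↔ w ∉ s)) {a b : ℕ} (ha : #{v | v ∈ s} = a)
    (hb : #{v | v ∉ s} = b) : Nonempty (G ≃g completeBipartiteGraph (Fin a) (Fin b)) := by
  let e : G ≃g completeBipartiteGraph {v // v ∈ s} {v // v ∉ s} :=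
    { toEquiv := (Equiv.sumCompl (· ∈ s)).symm
      map_rel_iff' := by
        intro v w
        by_cases hv : v ∈ s <;> by_cases hw : w ∈ s <;>
          simp [hv, hw, hG, Equiv.sumCompl_symm_apply_of_pos, Equiv.sumCompl_symm_apply_of_neg] }
  exact ⟨e.trans (completeBipartiteGraphCongr
    (Fintype.equivFinOfCardEq (by rw [Fintype.card_subtype, ha]))
    (Fintype.equivFinOfCardEq (by rw [Fintype.card_subtype, hb])))⟩

variable [DecidableRel G.Adj]

theorem neighborDegreeSum_eq_of_adj_iff (hG : ∀ v w, G.Adj v w ↔ (v ∈ s ↔ w ∉ s)) (u : V) :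
    G.neighborDegreeSum u = #{v | v ∈ s} * #{v | v ∉ s} := by
  have hdeg : ∀ w, G.degree w = #{v | w ∈ s ↔ v ∉ s} := fun w => by
    rw [← card_neighborFinset_eq_degree, neighborFinset_eq_filter]
    simp only [hG]
  rw [neighborDegreeSum, neighborFinset_eq_filter]
  by_cases hu : u ∈ s
  · rw [sum_const_nat (m := #{v | v ∈ s}) fun w hw => ?_, mul_comm]
    · simp [hG, hu]
    · simp only [mem_filter, hG, hu, true_iff] at hw
      simp [hdeg, hw]
  · rw [sum_const_nat (m := #{v | v ∉ s}) fun w hw => ?_]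
    · simp [hG, hu]
    · simp only [mem_filter, hG, hu, false_iff, not_not] at hw
      simp [hdeg, hw]

theorem nonempty_iso_completeBipartiteGraph_of_neighborDegreeSum_eq
    (hG : ∀ v w, G.Adj v w ↔ (v ∈ s ↔ w ∉ s)) {k : ℕ} (hk : k ≤ Fintype.card V) {u : V}
    (hu : G.neighborDegreeSum u = k * (Fintype.card V - k)) :
    Nonempty (G ≃g completeBipartiteGraph (Fin k) (Fin (Fintype.card V - k))) := by
  rw [neighborDegreeSum_eq_of_adj_iff hG] at hu
  rcases Nat.eq_and_eq_or_eq_and_eq_of_mul_eq (card_filter_add_card_filter_not _) hk hu with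
    ⟨ha, hb⟩ | ⟨ha, hb⟩
  · exact nonempty_iso_completeBipartiteGraph_of_adj_iff hG ha hb
  · refine nonempty_iso_completeBipartiteGraph_of_adj_iff (s := sᶜ) (fun v w => ?_) ?_ ?_
    · simp only [hG, Set.mem_compl_iff]
      tauto
    · simpa using hb
    · simpa using ha

end CompleteBipartite

end SimpleGraph

section Spectrum

variable {V : Type*} [Fintype V] {G : SimpleGraph V} {μ : ℝ}

theorem adjMat_eq_adjMatrix [DecidableRel G.Adj] : adjMat G = G.adjMatrix ℝ := by
  ext v w
  by_cases h : G.Adj v w <;> simp [adjMat, h]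

theorem adjMat_mulVec_apply [DecidableRel G.Adj] (x : V → ℝ) (v : V) :
    (adjMat G *ᵥ x) v = ∑ w ∈ G.neighborFinset v, x w := by
  rw [adjMat_eq_adjMatrix, adjMatrix_mulVec_apply]

theorem IsAdjEigenvalue.exists_abs_le (h : IsAdjEigenvalue G μ) :
    ∃ (x : V → ℝ) (u : V), adjMat G *ᵥ x = μ • x ∧ 0 < x u ∧ ∀ v, |x v| ≤ x u := by
  obtain ⟨x, hx0, hx⟩ := h
  obtain ⟨v₀, hv₀⟩ := Function.ne_iff.mp hx0
  obtain ⟨u, -, hu⟩ := exists_max_image univ (fun v => |x v|) ⟨v₀, mem_univ _⟩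
  have hpos : 0 < |x u| := (abs_pos.mpr hv₀).trans_le (hu v₀ (mem_univ _))
  rcases le_or_gt 0 (x u) with hxu | hxu
  · rw [abs_of_nonneg hxu] at hu hpos
    exact ⟨x, u, hx, hpos, fun v => hu v (mem_univ _)⟩
  · rw [abs_of_neg hxu] at hu
    refine ⟨-x, u, by rw [Matrix.mulVec_neg, hx, smul_neg], by simpa using hxu, fun v => ?_⟩
    simpa using hu v (mem_univ _)

variable [DecidableRel G.Adj] {x : V → ℝ} {u : V}

theorem sum_sum_sub_eq_mul (hx : adjMat G *ᵥ x = μ • x) (u : V) :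
    ∑ v ∈ G.neighborFinset u, ∑ w ∈ G.neighborFinset v, (x u - x w) =
      (G.neighborDegreeSum u - μ ^ 2) * x u := by
  have hx' : ∀ v, ∑ w ∈ G.neighborFinset v, x w = μ * x v := fun v => by
    rw [← adjMat_mulVec_apply, hx, Pi.smul_apply, smul_eq_mul]
  simp only [sum_sub_distrib, sum_const, card_neighborFinset_eq_degree, nsmul_eq_mul, hx',
    ← mul_sum, ← sum_mul, neighborDegreeSum, Nat.cast_sum]
  ring

theorem sq_le_neighborDegreeSum_of_abs_le (hx : adjMat G *ᵥ x = μ • x) (hu : 0 < x u)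
    (hmax : ∀ v, |x v| ≤ x u) : μ ^ 2 ≤ G.neighborDegreeSum u := by
  have hnn : 0 ≤ ∑ v ∈ G.neighborFinset u, ∑ w ∈ G.neighborFinset v, (x u - x w) :=
    sum_nonneg fun v _ => sum_nonneg fun w _ => sub_nonneg.mpr ((le_abs_self _).trans (hmax w))
  rw [sum_sum_sub_eq_mul hx] at hnn
  nlinarith

theorem eq_of_adj_of_adj_of_abs_le (hx : adjMat G *ᵥ x = μ • x) (hmax : ∀ v, |x v| ≤ x u)
    (hS : G.neighborDegreeSum u ≤ μ ^ 2) {v w : V} (huv : G.Adj u v) (hvw : G.Adj v w) :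
    x w = x u := by
  have hle : ∀ w, 0 ≤ x u - x w := fun w => sub_nonneg.mpr ((le_abs_self _).trans (hmax w))
  have hzero : ∑ v ∈ G.neighborFinset u, ∑ w ∈ G.neighborFinset v, (x u - x w) = 0 := by
    refine le_antisymm ?_ (sum_nonneg fun v _ => sum_nonneg fun w _ => hle w)
    rw [sum_sum_sub_eq_mul hx]
    exact mul_nonpos_of_nonpos_of_nonneg (by linarith) ((abs_nonneg _).trans (hmax u))
  have hv := (sum_eq_zero_iff_of_nonneg fun v _ => sum_nonneg fun w _ => hle w).mp hzero v
    ((mem_neighborFinset _ _ _).mpr huv)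
  have hw := (sum_eq_zero_iff_of_nonneg fun w _ => hle w).mp hv w
    ((mem_neighborFinset _ _ _).mpr hvw)
  linarith

theorem IsAdjEigenvalue.sq_le (h : IsAdjEigenvalue G μ) {K : ℕ}
    (hK : ∀ u, G.neighborDegreeSum u ≤ K) : μ ^ 2 ≤ K := by
  obtain ⟨x, u, hx, hu, hmax⟩ := h.exists_abs_le
  exact (sq_le_neighborDegreeSum_of_abs_le hx hu hmax).trans (by exact_mod_cast hK u)

theorem IsAdjEigenvalue.exists_neighborDegreeSum_eq_and_adj_iff (h : IsAdjEigenvalue G μ)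
    {K : ℕ} {s : Set V} (hμ : μ ^ 2 = K) (hS : ∀ u, G.neighborDegreeSum u ≤ K)
    (hcover : ∀ u, G.neighborDegreeSum u = K →
      ∀ v, v = u ∨ G.Adj u v ∨ ∃ w, G.Adj u w ∧ G.Adj w v)
    (hs : ∀ ⦃v w⦄, G.Adj v w → (v ∈ s ↔ w ∉ s)) :
    ∃ u, G.neighborDegreeSum u = K ∧ ∀ v w, G.Adj v w ↔ (v ∈ s ↔ w ∉ s) := by
  obtain ⟨x, u, hx, hu, hmax⟩ := h.exists_abs_le
  -- a vertex where `x` takes the value `x u` is again maximal, so `K = μ² ≤ S(p) ≤ K` there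
  have hK : ∀ p, x p = x u → G.neighborDegreeSum p = K := fun p hp => by
    have := sq_le_neighborDegreeSum_of_abs_le hx (hp ▸ hu) (hp ▸ hmax)
    exact le_antisymm (hS p) (by exact_mod_cast hμ ▸ this)
  refine ⟨u, hK u rfl, adj_iff_of_forall_within_two hs (F := {p | x p = x u}) rfl
    (fun p hp v w hpv hvw => ?_) (fun p hp => hcover p (hK p hp))⟩
  have hp : x p = x u := hp
  exact (eq_of_adj_of_adj_of_abs_le hx (hp ▸ hmax) (by rw [hK p hp, hμ]) hpv hvw).trans hp

end Spectrum

section SpectralRadius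

variable {V : Type*} [Fintype V] {G : SimpleGraph V} {μ : ℝ}

theorem finite_abs_isAdjEigenvalue : {r : ℝ | ∃ μ, IsAdjEigenvalue G μ ∧ r = |μ|}.Finite := by
  classical
  refine ((Module.End.finite_hasEigenvalue (Matrix.toLin' (adjMat G))).image abs).subset ?_
  rintro r ⟨μ, ⟨x, hx0, hx⟩, rfl⟩
  exact ⟨μ, Module.End.hasEigenvalue_of_hasEigenvector
    ⟨Module.End.mem_eigenspace_iff.mpr (by rw [Matrix.toLin'_apply, hx]), hx0⟩, rfl⟩

theorem specRad_le {r : ℝ} (hr : 0 ≤ r) (h : ∀ μ, IsAdjEigenvalue G μ → |μ| ≤ r) :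
    specRad G ≤ r :=
  Real.sSup_le (by rintro _ ⟨μ, hμ, rfl⟩; exact h μ hμ) hr

theorem IsAdjEigenvalue.abs_le_specRad (h : IsAdjEigenvalue G μ) : |μ| ≤ specRad G :=
  le_csSup finite_abs_isAdjEigenvalue.bddAbove ⟨μ, h, rfl⟩

/-- Without eigenvalues, `specRad G` is the junk value `sSup ∅ = 0`. -/
theorem exists_isAdjEigenvalue_abs_eq_specRad (h : specRad G ≠ 0) :
    ∃ μ, IsAdjEigenvalue G μ ∧ |μ| = specRad G := by
  have hne : {r : ℝ | ∃ μ, IsAdjEigenvalue G μ ∧ r = |μ|}.Nonempty := by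
    refine Set.nonempty_iff_ne_empty.mpr fun hemp => h ?_
    rw [specRad, hemp, Real.sSup_empty]
  obtain ⟨μ, hμ, heq⟩ := hne.csSup_mem finite_abs_isAdjEigenvalue
  exact ⟨μ, hμ, heq.symm⟩

theorem IsAdjEigenvalue.of_iso {W : Type*} [Fintype W] {H : SimpleGraph W} (e : G ≃g H)
    (h : IsAdjEigenvalue H μ) : IsAdjEigenvalue G μ := by
  obtain ⟨x, hx0, hx⟩ := h
  have hmat : adjMat G = (adjMat H).submatrix e e := by
    ext v w
    simp only [adjMat, Matrix.of_apply, Matrix.submatrix_apply]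
    congr 1
    exact propext e.map_adj_iff.symm
  refine ⟨x ∘ e, fun h0 => hx0 (funext fun w => by simpa using congrFun h0 (e.symm w)), ?_⟩
  rw [hmat, show ⇑e = e.toEquiv from rfl, Matrix.submatrix_mulVec_equiv, Function.comp_assoc,
    Equiv.self_comp_symm, Function.comp_id, hx]
  rfl

theorem isAdjEigenvalue_completeBipartiteGraph (α β : Type*) [Fintype α] [Fintype β]
    [Nonempty α] [Nonempty β] :
    IsAdjEigenvalue (completeBipartiteGraph α β) √((Fintype.card α * Fintype.card β : ℕ) : ℝ) := by
  classical
  set μ := √((Fintype.card α * Fintype.card β : ℕ) : ℝ)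
  have hμ : μ * μ = Fintype.card α * Fintype.card β := by
    rw [Real.mul_self_sqrt (Nat.cast_nonneg _), Nat.cast_mul]
  refine ⟨Sum.elim (fun _ => μ) (fun _ => Fintype.card α), fun h0 => ?_, ?_⟩
  · simpa using congrFun h0 (Sum.inr (Classical.arbitrary β))
  · ext (i | j) <;>
      simp [adjMat_mulVec_apply, neighborFinset_eq_filter, sum_filter, Fintype.sum_sum_type, hμ,
        mul_comm]

end SpectralRadius

/-- Let `k ≥ 1` and let `G` be a `C_{2k+2}`-free bipartite graph of order `n ≥ 2k+2`.  Then
`ρ(G) ≤ √(k(n-k))`, with equality iff `G ≅ K_{k,n-k}`. -/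
theorem leastEigenvalue_stmt9 (k n : ℕ) (hk : 1 ≤ k) (hn : 2 * k + 2 ≤ n)
    (G : SimpleGraph (Fin n)) (hbip : _root_.IsBipartite G)
    (hfree : ¬ HasCycleOn G (2 * k + 2)) :
    specRad G ≤ Real.sqrt (k * (n - k) : ℕ) ∧
      (specRad G = Real.sqrt (k * (n - k) : ℕ) ↔
        Nonempty (G ≃g completeBipartiteGraph (Fin k) (Fin (n - k)))) := by
  classical
  obtain ⟨s, hs⟩ := hbip
  have hbound := G.neighborDegreeSum_le hk (by rw [Fintype.card_fin]; omega) hs hfree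
  simp only [Fintype.card_fin] at hbound
  have hle : specRad G ≤ √(k * (n - k) : ℕ) :=
    specRad_le (Real.sqrt_nonneg _) fun μ hμ => Real.abs_le_sqrt (hμ.sq_le fun u => (hbound u).1)
  refine ⟨hle, fun heq => ?_, fun ⟨e⟩ => ?_⟩
  · have hpos : 0 < k * (n - k) := Nat.mul_pos (by omega) (by omega)
    obtain ⟨μ, hμ, hμρ⟩ := exists_isAdjEigenvalue_abs_eq_specRad (G := G) (by rw [heq]; positivity)
    obtain ⟨u, hu, hG⟩ := hμ.exists_neighborDegreeSum_eq_and_adj_iff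
      (by rw [← sq_abs, hμρ, heq, Real.sq_sqrt (Nat.cast_nonneg _)]) (fun u => (hbound u).1)
      (fun u => (hbound u).2) hs
    have hiso := nonempty_iso_completeBipartiteGraph_of_neighborDegreeSum_eq (k := k) hG
      (by rw [Fintype.card_fin]; omega) (hu.trans (by rw [Fintype.card_fin]))
    rwa [Fintype.card_fin] at hiso
  · have : Nonempty (Fin k) := ⟨⟨0, hk⟩⟩
    have : Nonempty (Fin (n - k)) := ⟨⟨0, by omega⟩⟩
    have := (isAdjEigenvalue_completeBipartiteGraph (Fin k) (Fin (n - k))).of_iso e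
    exact le_antisymm hle (by
      simpa only [Fintype.card_fin, abs_of_nonneg (Real.sqrt_nonneg _)] using this.abs_le_specRad)
end

section
/- Let k ≥ 1 and let G be a bipartite graph of order n ≥ 2k+2 containing no cycle on 2k+2 vertices. Then for every vertex u of G, the number of walks of length 2 in G starting at u is at most k(n−k); equivalently, |N(u)| + e(N(u), N²(u)) ≤ k(n−k), where the first quantity equals the u-th row sum of A(G)². -/
open SimpleGraph Finset

/-- The set `N²(u)` of vertices at distance exactly 2 from `u`. -/
def distTwoSet {V : Type*} [Fintype V] [DecidableEq V]
    (G : SimpleGraph V) [DecidableRel G.Adj] (u : V) : Finset V :=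
  Finset.univ.filter fun v => ¬ G.Adj u v ∧ v ≠ u ∧ ∃ w : V, G.Adj u w ∧ G.Adj w v

/-- `e(s, t)`: the number of edges of `G` with one endpoint in `s` and the other in `t`
(for disjoint `s` and `t`). -/
def interEdges {V : Type*} [Fintype V] [DecidableEq V]
    (G : SimpleGraph V) [DecidableRel G.Adj] (s t : Finset V) : ℕ :=
  ((s ×ˢ t).filter fun p => G.Adj p.1 p.2).card

/-!
Since `G` is bipartite, `N(u)` is independent, so both quantities equal `∑_{w ∈ N(u)} deg w`, the
number of edges of the subgraph `B` of `G` formed by the edges at `N(u)`. `B` is bipartite with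
`N(u)` as one side. A cycle of `B` of length at least `2k + 2` contains a path with `2k` edges
between two vertices of `N(u)` that avoids `u`; closing it through `u` gives a `C_{2k+2}` in `G`.
So all cycles of `B` are shorter than `2k + 2`, and a bipartite graph on `n ≥ 2k` vertices with
this property has at most `k (n - k)` edges.
-/

namespace SimpleGraph

variable {V : Type*} {G : SimpleGraph V}

namespace Walk

lemma IsPath.isCycle_cons {u v : V} {p : G.Walk v u} (hp : p.IsPath) (h : G.Adj u v)
    (hl : 2 ≤ p.length) : (cons h p).IsCycle :=
  isCycle_iff_isPath_tail_and_le_length.mpr ⟨by simpa using hp, by simp; omega⟩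

lemma IsPath.isCycle_cons_concat {u x y : V} {r : G.Walk x y} (hr : r.IsPath)
    (hu : u ∉ r.support) (hx : G.Adj u x) (hy : G.Adj y u) (hl : 1 ≤ r.length) :
    (cons hx (r.concat hy)).IsCycle :=
  (hr.concat hu hy).isCycle_cons hx (by simp; omega)

lemma IsCycle.exists_isPath_from_snd {a : V} {c : G.Walk a a} (hc : c.IsCycle) {j : ℕ}
    (hj : j + 2 ≤ c.length) :
    ∃ (y : V) (r : G.Walk c.snd y), r.IsPath ∧ r.length = j ∧ a ∉ r.support ∧
      r.support ⊆ c.support := by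
  have hvert : ∀ v ∈ (c.tail.take j).support, ∃ i ≤ j, c.getVert (i + 1) = v := by
    intro v hv
    obtain ⟨i, rfl, -⟩ := mem_support_iff_exists_getVert.mp hv
    exact ⟨min j i, min_le_left _ _, by simp [tail, add_comm]⟩
  refine ⟨_, c.tail.take j, hc.isPath_tail.take j, by simp; omega, ?_, ?_⟩
  · intro ha
    obtain ⟨i, hi, hai⟩ := hvert a ha
    rcases (hc.getVert_endpoint_iff (by omega)).mp hai with h | h <;> omega
  · intro v hv
    obtain ⟨i, -, rfl⟩ := hvert v hv
    exact c.getVert_mem_support _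

end Walk

lemma Coloring.odd_length_of_adj (col : G.Coloring Bool) {u v : V} (p : G.Walk u v)
    (h : G.Adj u v) : Odd p.length := by
  have := col.valid h
  rw [col.odd_length_iff_not_congr]
  revert this
  cases col u <;> cases col v <;> simp

section Bipartition

variable {s t : Set V}

lemma IsBipartiteWith.mem_iff_notMem (h : G.IsBipartiteWith s t) {v w : V} (hvw : G.Adj v w) :
    v ∈ s ↔ w ∉ s := by
  have := Set.disjoint_left.mp h.disjoint
  rcases h.mem_of_adj hvw with ⟨hv, hw⟩ | ⟨hv, hw⟩
  · exact iff_of_true hv fun hw' => this hw' hw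
  · exact iff_of_false (fun hv' => this hv' hv) (not_not.mpr hw)

def IsBipartiteWith.coloring [DecidablePred (· ∈ s)] (h : G.IsBipartiteWith s t) :
    G.Coloring Bool :=
  Coloring.mk (fun v => decide (v ∈ s)) fun {v w} hvw => by
    have := h.mem_iff_notMem hvw
    by_cases hv : v ∈ s <;> simp_all

@[simp]
lemma IsBipartiteWith.coloring_apply [DecidablePred (· ∈ s)] (h : G.IsBipartiteWith s t) (v : V) :
    h.coloring v = decide (v ∈ s) :=
  rfl

lemma IsBipartiteWith.mem_of_even_length (h : G.IsBipartiteWith s t) {x y : V} (p : G.Walk x y)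
    (hp : Even p.length) (hx : x ∈ s) : y ∈ s := by
  classical
  simpa [hx] using (h.coloring.even_length_iff_congr p).mp hp

end Bipartition

/-- Cut a path with `2k` edges and both ends in `N(u)` out of the cycle, avoiding `u`, and close it
up through `u`. -/
theorem hasCycleOn_of_isBipartiteWith_neighborSet {B : SimpleGraph V} (hBG : B ≤ G) {u : V}
    {t : Set V} (hB : B.IsBipartiteWith (G.neighborSet u) t) {k : ℕ} (hk : 1 ≤ k) {a : V}
    {c : B.Walk a a} (hc : c.IsCycle) (hlen : 2 * k + 2 ≤ c.length) :
    HasCycleOn G (2 * k + 2) := by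
  classical
  obtain ⟨a', ha'c, ha'N, ha'u⟩ : ∃ a' ∈ c.support, a' ∉ G.neighborSet u ∧
      (u ∈ c.support → a' = u) := by
    by_cases hu : u ∈ c.support
    · exact ⟨u, hu, G.notMem_neighborSet_self, fun _ => rfl⟩
    by_cases ha : a ∈ G.neighborSet u
    · exact ⟨c.snd, c.getVert_mem_support 1,
        (hB.mem_iff_notMem (Walk.adj_snd hc.not_nil)).mp ha, fun h => absurd h hu⟩
    · exact ⟨a, c.start_mem_support, ha, fun h => absurd h hu⟩
  have hc' := hc.rotate ha'c
  obtain ⟨y, r, hr, hrlen, ha'r, hrc⟩ :=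
    hc'.exists_isPath_from_snd (j := 2 * k) (by simpa using hlen)
  have hx : G.Adj u (c.rotate a' ha'c).snd :=
    not_not.mp ((hB.mem_iff_notMem (Walk.adj_snd hc'.not_nil)).not.mp ha'N)
  have hy : G.Adj u y := hB.mem_of_even_length r (by simp [hrlen]) hx
  have hur : u ∉ r.support := fun hu => by
    obtain rfl := ha'u ((Walk.mem_support_rotate_iff ..).mp (hrc hu))
    exact ha'r hu
  refine ⟨u, .cons hx ((r.mapLe hBG).concat hy.symm), ?_, by simp [hrlen]⟩
  exact (hr.mapLe hBG).isCycle_cons_concat (by simpa using hur) hx hy.symm (by simp; omega)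

variable [Fintype V] [DecidableRel G.Adj]

/-- The neighbours of `a` occupy distinct odd positions on `p`, so the farthest one is at position
at least `2 * G.degree a - 1`. -/
lemma Walk.IsPath.exists_isCycle_two_mul_degree_le (col : G.Coloring Bool) {a b : V}
    {p : G.Walk a b} (hp : p.IsPath) (hN : ∀ w, G.Adj a w → w ∈ p.support)
    (hd : 2 ≤ G.degree a) : ∃ c : G.Walk a a, c.IsCycle ∧ 2 * G.degree a ≤ c.length := by
  classical
  obtain ⟨i, hi, hil, hadj⟩ : ∃ i, 2 * G.degree a ≤ i + 1 ∧ i ≤ p.length ∧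
      G.Adj a (p.getVert i) := by
    by_contra! hfar
    have hsub : G.neighborFinset a ⊆
        (range (G.degree a - 1)).image fun j => p.getVert (2 * j + 1) := by
      intro w hw
      rw [mem_neighborFinset] at hw
      obtain ⟨i, rfl, hil⟩ := Walk.mem_support_iff_exists_getVert.mp (hN w hw)
      have hodd := col.odd_length_of_adj (p.take i) hw
      rw [Walk.take_length, min_eq_left hil] at hodd
      obtain ⟨j, rfl⟩ := hodd
      have : ¬ 2 * G.degree a ≤ 2 * j + 1 + 1 := fun h => hfar _ h hil hw
      exact mem_image.mpr ⟨j, mem_range.mpr (by omega), rfl⟩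
    have := (card_le_card hsub).trans card_image_le
    rw [card_neighborFinset_eq_degree, card_range] at this
    omega
  refine ⟨.cons hadj (p.take i).reverse, (hp.take i).reverse.isCycle_cons hadj ?_, ?_⟩ <;>
    simp <;> omega

theorem exists_isCycle_two_mul_le_length (col : G.Coloring Bool) {d : ℕ} (hd : 2 ≤ d)
    {x y : V} (hxy : G.Adj x y) (hdeg : ∀ v w, G.Adj v w → d ≤ G.degree v) :
    ∃ (a : V) (c : G.Walk a a), c.IsCycle ∧ 2 * d ≤ c.length := by
  have : Nonempty V := ⟨x⟩
  obtain ⟨a, b, p, hp, hlongest⟩ := Walk.exists_isPath_forall_isPath_length_le_length G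
  have hN : ∀ w, G.Adj a w → w ∈ p.support := by
    intro w haw
    by_contra hw
    have := hlongest _ _ (.cons haw.symm p) (hp.cons hw)
    simp at this
  have hnil : ¬ p.Nil := by
    intro hnil
    have := hlongest _ _ hxy.toWalk (by simp [hxy.ne])
    simp [Walk.length_eq_zero_iff.mpr hnil] at this
  have hda := hdeg a _ (Walk.adj_snd hnil)
  obtain ⟨c, hc, hlen⟩ := hp.exists_isCycle_two_mul_degree_le col hN (by omega)
  exact ⟨a, c, hc, by omega⟩

lemma card_edgeFinset_le_mul_of_coloring (col : G.Coloring Bool)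
    {s : Finset V} (hs : ∀ v w, G.Adj v w → v ∈ s) :
    #G.edgeFinset ≤ #{v ∈ s | col v} * #{v ∈ s | ¬ col v} := by
  have hB : G.IsBipartiteWith ↑{v ∈ s | col v} ↑{v ∈ s | ¬ col v} :=
    { disjoint := disjoint_coe.mpr (disjoint_filter_filter_not s s _)
      mem_of_adj := fun v w h => by
        have := col.valid h
        have := hs v w h
        have := hs w v h.symm
        rcases hv : col v <;> rcases hw : col w <;> simp_all }
  rw [← isBipartiteWith_sum_degrees_eq_card_edges hB, ← smul_eq_mul, ← sum_const]
  exact sum_le_sum fun v hv => isBipartiteWith_degree_le hB hv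

/-- Delete vertices of degree at most `k` while there are any; a graph whose non-isolated
vertices all have degree at least `k + 1` has a cycle of length at least `2k + 2`. The base case
`#s = 2k` is `ab ≤ k²` for the two colour classes. -/
theorem card_edgeFinset_le_of_forall_isCycle_length_le [DecidableEq V] {k : ℕ} (hk : 1 ≤ k)
    (col : G.Coloring Bool) (hcyc : ∀ a (c : G.Walk a a), c.IsCycle → c.length < 2 * k + 2)
    (s : Finset V) (hs : ∀ v w, G.Adj v w → v ∈ s) (hcard : 2 * k ≤ #s) :
    #G.edgeFinset ≤ k * (#s - k) := by
  induction s using Finset.strongInduction generalizing G with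
  | H s ih =>
    rcases hcard.eq_or_lt with hcard | hcard
    · have hamgm := four_mul_le_sq_add #{v ∈ s | col v} #{v ∈ s | ¬ col v}
      rw [card_filter_add_card_filter_not, ← hcard] at hamgm
      have hcount := card_edgeFinset_le_mul_of_coloring col hs
      rw [← hcard, show 2 * k - k = k by omega]
      nlinarith
    by_cases hlow : ∃ v ∈ s, G.degree v ≤ k
    · obtain ⟨v, hv, hdeg⟩ := hlow
      have hle := G.deleteIncidenceSet_le v
      have ih' := ih (s.erase v) (erase_ssubset hv) (col.comp (Hom.ofLE hle))
        (fun a c hc => by simpa using hcyc a (c.mapLe hle) (hc.mapLe hle))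
        (fun a b h => mem_erase.mpr ⟨(deleteIncidenceSet_adj.mp h).2.1,
          hs a b (deleteIncidenceSet_adj.mp h).1⟩)
        (by rw [card_erase_of_mem hv]; omega)
      rw [card_edgeFinset_deleteIncidenceSet, card_erase_of_mem hv] at ih'
      have := G.degree_le_card_edgeFinset (v := v)
      rw [show #s - k = (#s - 1 - k) + 1 by omega, mul_add_one]
      omega
    · push Not at hlow
      obtain ⟨v, hv⟩ := card_pos.mp (by omega : 0 < #s)
      obtain ⟨w, hvw⟩ := (G.degree_pos_iff_exists_adj v).mp (by have := hlow v hv; omega)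
      obtain ⟨a, c, hc, hlen⟩ := exists_isCycle_two_mul_le_length col (d := k + 1) (by omega) hvw
        fun v w h => hlow v (hs v w h)
      have := hcyc a c hc
      omega

lemma sum_adjMatrix_mul_self_apply {R : Type*} [NonAssocSemiring R] (u : V) :
    ∑ v, (G.adjMatrix R * G.adjMatrix R) u v = ∑ w ∈ G.neighborFinset u, (G.degree w : R) := by
  simp only [adjMatrix_mul_apply]
  rw [sum_comm]
  refine sum_congr rfl fun w _ => ?_
  simp [adjMatrix_apply, sum_boole, neighborFinset_eq_filter, degree]

lemma card_neighborFinset_add_interEdges_distTwoSet [DecidableEq V] {u : V}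
    (hN : G.IsIndepSet (G.neighborSet u)) :
    #(G.neighborFinset u) + interEdges G (G.neighborFinset u) (distTwoSet G u) =
      ∑ w ∈ G.neighborFinset u, G.degree w := by
  have hu : u ∉ distTwoSet G u := by simp [distTwoSet]
  have hnbr : ∀ w ∈ G.neighborFinset u,
      G.neighborFinset w = insert u {v ∈ distTwoSet G u | G.Adj w v} := by
    intro w hw
    rw [mem_neighborFinset] at hw
    ext v
    simp only [mem_neighborFinset, mem_insert, mem_filter, distTwoSet, mem_univ, true_and]
    refine ⟨fun hwv => or_iff_not_imp_left.mpr fun hvu =>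
      ⟨⟨fun huv => ?_, hvu, w, hw, hwv⟩, hwv⟩, ?_⟩
    · exact hN hw huv hwv.ne hwv
    · rintro (rfl | ⟨-, hwv⟩)
      exacts [hw.symm, hwv]
  rw [interEdges, card_filter, sum_product, card_eq_sum_ones, ← sum_add_distrib]
  refine sum_congr rfl fun w hw => ?_
  rw [← card_neighborFinset_eq_degree, hnbr w hw, card_insert_of_notMem (by simp [hu]),
    card_filter, add_comm]

theorem sum_degree_neighborFinset_le [DecidableEq V] {k : ℕ} (hk : 1 ≤ k)
    (hV : 2 * k ≤ Fintype.card V) {u : V}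
    (hN : G.IsIndepSet (G.neighborSet u)) (hfree : ¬ HasCycleOn G (2 * k + 2)) :
    ∑ w ∈ G.neighborFinset u, G.degree w ≤ k * (Fintype.card V - k) := by
  set X := G.neighborFinset u
  have hB : (G.between ↑X ↑Xᶜ).IsBipartiteWith ↑X ↑Xᶜ :=
    between_isBipartiteWith (disjoint_coe.mpr disjoint_compl_right)
  have hdeg : ∀ w ∈ X, (G.between ↑X ↑Xᶜ).degree w = G.degree w := by
    intro w hw
    simp_rw [← card_neighborFinset_eq_degree]
    congr 1
    ext v
    simp only [mem_neighborFinset, between_adj, mem_coe, coe_compl, Set.mem_compl_iff]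
    refine ⟨fun h => h.1, fun hwv => ⟨hwv, Or.inl ⟨hw, fun hv => ?_⟩⟩⟩
    exact hN (by simpa [X] using hw) (by simpa [X] using hv) hwv.ne hwv
  have hcyc : ∀ a (c : (G.between ↑X ↑Xᶜ).Walk a a), c.IsCycle → c.length < 2 * k + 2 := by
    intro a c hc
    by_contra! hlen
    have hB' : (G.between ↑X ↑Xᶜ).IsBipartiteWith (G.neighborSet u) ↑Xᶜ :=
      ⟨by simpa [X] using hB.disjoint, fun v w h => by simpa [X] using hB.mem_of_adj h⟩
    exact hfree (hasCycleOn_of_isBipartiteWith_neighborSet between_le hB' hk hc hlen)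
  calc ∑ w ∈ X, G.degree w = ∑ w ∈ X, (G.between ↑X ↑Xᶜ).degree w := (sum_congr rfl hdeg).symm
    _ = #(G.between ↑X ↑Xᶜ).edgeFinset := isBipartiteWith_sum_degrees_eq_card_edges hB
    _ ≤ k * (Fintype.card V - k) :=
      card_edgeFinset_le_of_forall_isCycle_length_le hk hB.coloring hcyc univ
        (fun v _ _ => mem_univ v) (by rwa [card_univ])

end SimpleGraph

open SimpleGraph

/-- Let `k ≥ 1` and let `G` be a `C_{2k+2}`-free bipartite graph of order `n ≥ 2k+2`.  Then
for every vertex `u`, the number of walks of length 2 starting at `u` — i.e. the `u`-th row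
sum of `A(G)²`, which equals `|N(u)| + e(N(u), N²(u))` — is at most `k(n-k)`. -/
theorem leastEigenvalue_stmt14 (k n : ℕ) (hk : 1 ≤ k) (hn : 2 * k + 2 ≤ n)
    (G : SimpleGraph (Fin n)) [DecidableRel G.Adj] (hbip : _root_.IsBipartite G)
    (hfree : ¬ HasCycleOn G (2 * k + 2)) (u : Fin n) :
    (∑ v : Fin n, ((G.adjMatrix ℝ) * (G.adjMatrix ℝ)) u v ≤ (k * (n - k) : ℕ)) ∧
      (G.neighborFinset u).card + interEdges G (G.neighborFinset u) (distTwoSet G u) ≤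
        k * (n - k) := by
  obtain ⟨S, hS⟩ := hbip
  have hN : G.IsIndepSet (G.neighborSet u) := fun v huv w huw _ hvw => by
    have := hS huv; have := hS huw; have := hS hvw
    tauto
  have hbound := sum_degree_neighborFinset_le hk (by simp; omega) hN hfree
  rw [Fintype.card_fin] at hbound
  refine ⟨?_, ?_⟩
  · rw [sum_adjMatrix_mul_self_apply]
    exact_mod_cast hbound
  · rw [card_neighborFinset_add_interEdges_distTwoSet hN]
    exact hbound
end
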